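/- arXiv:2203.06040 — 4 statements merged into one kernel-verified Lean document; each statement's English description precedes it below -/
import Mathlib

section
/- Let 1 ≤ k ≤ n and let j be a positive divisor of n. Then the j-th cyclotomic polynomial Φ_j(q) divides the Gaussian binomial coefficient binom(n,k)_q in ℤ[q] if and only if j does not divide k. -/
/-! Over `ℤ` the cyclotomic polynomial `Φ_j` is prime and `X^m - 1 = ∏_{d ∣ m} Φ_d`, so `Φ_j`
divides `1 - q^m` exactly once when `j ∣ m` and not at all otherwise. As `j ∣ n`, `j ∣ n - i` iff
`j ∣ i`; hence `Φ_j` occurs in the numerator once for each multiple of `j` in `[0, k)` and in the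
denominator once for each multiple of `j` in `[1, k]`, and these counts differ (by one) exactly
when `j ∤ k`. -/

open Polynomial Finset

/-- Numerator of the Gaussian binomial coefficient: `∏_{i=0}^{k-1} (1 - q^{n-i})`. -/
noncomputable def gaussNum (n k : ℕ) : Polynomial ℤ :=
  ∏ i ∈ Finset.range k, (1 - X ^ (n - i))

/-- Denominator of the Gaussian binomial coefficient: `∏_{i=1}^{k} (1 - q^i)`. -/
noncomputable def gaussDen (k : ℕ) : Polynomial ℤ :=
  ∏ i ∈ Finset.range k, (1 - X ^ (i + 1))

namespace Polynomial

theorem cyclotomic_dvd_cyclotomic_iff {j d : ℕ} (hj : 0 < j) (hd : 0 < d) :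
    cyclotomic j ℤ ∣ cyclotomic d ℤ ↔ j = d := by
  refine ⟨fun h => cyclotomic_injective (R := ℤ) ?_, fun h => h ▸ dvd_rfl⟩
  exact eq_of_monic_of_associated (cyclotomic.monic j ℤ) (cyclotomic.monic d ℤ)
    ((cyclotomic.irreducible hj).associated_of_dvd (cyclotomic.irreducible hd) h)

theorem emultiplicity_cyclotomic_cyclotomic {j d : ℕ} (hj : 0 < j) (hd : 0 < d) :
    emultiplicity (cyclotomic j ℤ) (cyclotomic d ℤ) = if j = d then 1 else 0 := by
  split_ifs with hjd
  · subst hjd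
    exact (FiniteMultiplicity.of_prime_left (cyclotomic.irreducible hj).prime
      (cyclotomic_ne_zero j ℤ)).emultiplicity_self
  · rwa [emultiplicity_eq_zero, cyclotomic_dvd_cyclotomic_iff hj hd]

theorem emultiplicity_cyclotomic_X_pow_sub_one {j m : ℕ} (hj : 0 < j) (hm : 0 < m) :
    emultiplicity (cyclotomic j ℤ) (X ^ m - 1) = if j ∣ m then 1 else 0 := by
  rw [← prod_cyclotomic_eq_X_pow_sub_one hm,
    Finset.emultiplicity_prod (cyclotomic.irreducible hj).prime,
    Finset.sum_congr rfl fun d hd =>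
      emultiplicity_cyclotomic_cyclotomic hj (Nat.pos_of_mem_divisors hd),
    Finset.sum_ite_eq]
  simp [Nat.mem_divisors, hm.ne']

theorem emultiplicity_cyclotomic_one_sub_X_pow {j m : ℕ} (hj : 0 < j) (hm : 0 < m) :
    emultiplicity (cyclotomic j ℤ) (1 - X ^ m) = if j ∣ m then 1 else 0 := by
  rw [← neg_sub, emultiplicity_neg, emultiplicity_cyclotomic_X_pow_sub_one hj hm]

end Polynomial

theorem emultiplicity_cyclotomic_gaussNum {n k j : ℕ} (hkn : k ≤ n) (hj : 0 < j) (hjn : j ∣ n) :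
    emultiplicity (cyclotomic j ℤ) (gaussNum n k) = ∑ i ∈ range k, if j ∣ i then 1 else 0 := by
  rw [gaussNum, Finset.emultiplicity_prod (cyclotomic.irreducible hj).prime]
  refine Finset.sum_congr rfl fun i hi => ?_
  have hik : i < k := mem_range.mp hi
  rw [emultiplicity_cyclotomic_one_sub_X_pow hj (by omega)]
  simp only [Nat.dvd_sub_iff_right (by omega : i ≤ n) hjn]

theorem emultiplicity_cyclotomic_gaussDen {k j : ℕ} (hj : 0 < j) :
    emultiplicity (cyclotomic j ℤ) (gaussDen k) = ∑ i ∈ range k, if j ∣ i + 1 then 1 else 0 := by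
  rw [gaussDen, Finset.emultiplicity_prod (cyclotomic.irreducible hj).prime]
  exact Finset.sum_congr rfl fun i _ => emultiplicity_cyclotomic_one_sub_X_pow hj i.succ_pos

/-- For `1 ≤ k ≤ n` and a positive divisor `j` of `n`, the cyclotomic polynomial
`Φ_j(q)` divides the Gaussian binomial coefficient `binom(n,k)_q` iff `j ∤ k`. -/
theorem cyclotomic_dvd_gaussian_binomial_iff (n k j : ℕ) (hk1 : 1 ≤ k) (hkn : k ≤ n)
    (hj : 0 < j) (hjn : j ∣ n) (P : Polynomial ℤ) (hP : P * gaussDen k = gaussNum n k) :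
    cyclotomic j ℤ ∣ P ↔ ¬ j ∣ k := by
  obtain ⟨m, rfl⟩ : ∃ m, k = m + 1 := ⟨k - 1, by omega⟩
  set S : ℕ∞ := ∑ i ∈ range m, if j ∣ i + 1 then 1 else 0
  have hS : S ≠ ⊤ := ENat.sum_ne_top.mpr fun i _ => by split_ifs <;> simp
  -- Both sides share `S`: they differ only in the numerator's `i = 0` and `1 - X^(m+1)` below.
  have hmult : emultiplicity (cyclotomic j ℤ) P + (if j ∣ m + 1 then 1 else 0) + S = 1 + S := by
    have h := congrArg (emultiplicity (cyclotomic j ℤ)) hP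
    rw [emultiplicity_mul (cyclotomic.irreducible hj).prime, emultiplicity_cyclotomic_gaussDen hj,
      emultiplicity_cyclotomic_gaussNum hkn hj hjn, sum_range_succ, sum_range_succ'] at h
    simpa only [dvd_zero, if_true, add_comm, add_left_comm, add_assoc] using h
  have hcancel : emultiplicity (cyclotomic j ℤ) P + (if j ∣ m + 1 then 1 else 0) = 1 :=
    WithTop.add_right_cancel hS hmult
  rw [← emultiplicity_ne_zero]
  split_ifs at hcancel with hjm
  · simpa [hjm] using hcancel
  · rw [add_zero] at hcancel
    simp [hjm, hcancel]
end

section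
/- Let 1 ≤ k ≤ n-1. The rational function E(q) := binom(n,k)_q · (q-1)·q^n / (q^n - 1) is a polynomial in q if and only if gcd(k,n) = 1. -/
open Polynomial Finset

/-! Over `ℂ`, `X ^ n - 1` is the product of the pairwise coprime factors `X - ζ` over the
`n`-th roots of unity, so it divides `P * (X - 1) * X ^ n` iff `P` vanishes at every `n`-th root
of unity `ζ ≠ 1`. Such a `ζ`, of order `d ∣ n`, is a simple root of `1 - X ^ m` exactly when
`d ∣ m`; hence it is a root of the numerator `⌈k / d⌉` times and of the denominator `⌊k / d⌋`
times, so it is a root of `P` iff `d ∤ k`. The condition therefore says that no `d > 1` divides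
both `k` and `n`. -/

theorem card_filter_range_dvd_eq_card_filter_range_dvd_succ_add (d k : ℕ) :
    #{i ∈ range k | d ∣ i} = #{i ∈ range k | d ∣ i + 1} + if d ∣ k then 0 else 1 := by
  induction k with
  | zero => simp
  | succ k ih =>
    simp only [card_filter, sum_range_succ] at ih ⊢
    split_ifs at ih ⊢ <;> omega

section CommRing

variable {R : Type*} [CommRing R]

theorem one_sub_X_pow_ne_zero [Nontrivial R] {m : ℕ} (hm : m ≠ 0) : (1 - X ^ m : R[X]) ≠ 0 := by
  rw [← neg_sub, neg_ne_zero, ← map_one C]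
  exact X_pow_sub_C_ne_zero (Nat.pos_of_ne_zero hm) 1

theorem map_gaussNum (n k : ℕ) :
    (gaussNum n k).map (Int.castRingHom R) = ∏ i ∈ range k, (1 - X ^ (n - i) : R[X]) := by
  simp [gaussNum, Polynomial.map_prod]

theorem map_gaussDen (k : ℕ) :
    (gaussDen k).map (Int.castRingHom R) = ∏ i ∈ range k, (1 - X ^ (i + 1) : R[X]) := by
  simp [gaussDen, Polynomial.map_prod]

theorem map_gaussNum_ne_zero [IsDomain R] {n k : ℕ} (hkn : k ≤ n) :
    (gaussNum n k).map (Int.castRingHom R) ≠ 0 := by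
  rw [map_gaussNum]
  exact prod_ne_zero_iff.mpr fun i hi => one_sub_X_pow_ne_zero (by grind)

end CommRing

section CharZero

variable {K : Type*} [Field K] [CharZero K] [DecidableEq K]

theorem rootMultiplicity_one_sub_X_pow {m : ℕ} (hm : m ≠ 0) (a : K) :
    rootMultiplicity a (1 - X ^ m : K[X]) = if a ^ m = 1 then 1 else 0 := by
  have hsep : (X ^ m - C 1 : K[X]).Separable :=
    separable_X_pow_sub_C 1 (Nat.cast_ne_zero.mpr hm) one_ne_zero
  rw [← count_roots, ← neg_sub, ← map_one C, roots_neg,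
    Multiset.count_eq_of_nodup (nodup_roots hsep), ← nthRoots]
  simp only [mem_nthRoots (Nat.pos_of_ne_zero hm)]

theorem rootMultiplicity_prod_one_sub_X_pow {ι : Type*} {s : Finset ι} {e : ι → ℕ}
    (he : ∀ i ∈ s, e i ≠ 0) (a : K) :
    rootMultiplicity a (∏ i ∈ s, (1 - X ^ e i) : K[X]) = #{i ∈ s | a ^ e i = 1} := by
  have hne : ∏ i ∈ s, (1 - X ^ e i : K[X]) ≠ 0 :=
    prod_ne_zero_iff.mpr fun i hi => one_sub_X_pow_ne_zero (he i hi)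
  rw [← count_roots, roots_prod _ _ hne, Multiset.count_bind, card_filter]
  refine sum_congr rfl fun i hi => ?_
  rw [count_roots, rootMultiplicity_one_sub_X_pow (he i hi)]

theorem rootMultiplicity_map_gaussNum {n k : ℕ} (hkn : k ≤ n) {ζ : K} (hζ : ζ ^ n = 1) :
    rootMultiplicity ζ ((gaussNum n k).map (Int.castRingHom K)) =
      #{i ∈ range k | orderOf ζ ∣ i} := by
  rw [map_gaussNum, rootMultiplicity_prod_one_sub_X_pow (by grind)]
  refine congrArg card (filter_congr fun i hi => ?_)
  have hsplit : ζ ^ (n - i) * ζ ^ i = 1 := by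
    rw [← pow_add, Nat.sub_add_cancel (by grind), hζ]
  rw [orderOf_dvd_iff_pow_eq_one, eq_one_iff_eq_one_of_mul_eq_one hsplit]

theorem rootMultiplicity_map_gaussDen (k : ℕ) (ζ : K) :
    rootMultiplicity ζ ((gaussDen k).map (Int.castRingHom K)) =
      #{i ∈ range k | orderOf ζ ∣ i + 1} := by
  simp only [map_gaussDen, rootMultiplicity_prod_one_sub_X_pow (fun _ _ => Nat.succ_ne_zero _),
    orderOf_dvd_iff_pow_eq_one]

theorem rootMultiplicity_map_of_mul_gaussDen_eq_gaussNum {n k : ℕ} (hkn : k ≤ n) {P : ℤ[X]}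
    (hP : P * gaussDen k = gaussNum n k) {ζ : K} (hζ : ζ ^ n = 1) :
    rootMultiplicity ζ (P.map (Int.castRingHom K)) = if orderOf ζ ∣ k then 0 else 1 := by
  have hmul := congrArg (map (Int.castRingHom K)) hP
  rw [Polynomial.map_mul] at hmul
  have hsum := rootMultiplicity_mul (x := ζ) (hmul ▸ map_gaussNum_ne_zero hkn)
  rw [hmul, rootMultiplicity_map_gaussNum hkn hζ, rootMultiplicity_map_gaussDen,
    card_filter_range_dvd_eq_card_filter_range_dvd_succ_add] at hsum
  omega

theorem isRoot_map_iff_of_mul_gaussDen_eq_gaussNum {n k : ℕ} (hkn : k ≤ n) {P : ℤ[X]}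
    (hP : P * gaussDen k = gaussNum n k) {ζ : K} (hζ : ζ ^ n = 1) :
    (P.map (Int.castRingHom K)).IsRoot ζ ↔ ¬ orderOf ζ ∣ k := by
  have hP0 : P.map (Int.castRingHom K) ≠ 0 := fun h =>
    map_gaussNum_ne_zero (R := K) hkn (by rw [← hP, Polynomial.map_mul, h, zero_mul])
  rw [← rootMultiplicity_pos hP0, rootMultiplicity_map_of_mul_gaussDen_eq_gaussNum hkn hP hζ]
  split_ifs <;> simp_all

end CharZero

theorem X_pow_sub_one_dvd_iff_forall_isRoot {K : Type*} [Field K] {n : ℕ} {ω : K}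
    (hω : IsPrimitiveRoot ω n) (hn : 0 < n) (Q : K[X]) :
    X ^ n - 1 ∣ Q ↔ ∀ ζ : K, ζ ^ n = 1 → Q.IsRoot ζ := by
  rw [X_pow_sub_one_eq_prod hn hω]
  refine ⟨fun h ζ hζ => ?_, fun h => ?_⟩
  · have hmem : ζ ∈ nthRootsFinset n (1 : K) := (mem_nthRootsFinset hn 1).mpr hζ
    exact dvd_iff_isRoot.mp ((dvd_prod_of_mem (fun a => X - C a) hmem).trans h)
  · refine prod_dvd_of_coprime (fun a _ b _ hab => ?_)
      fun ζ hζ => dvd_iff_isRoot.mpr (h ζ ((mem_nthRootsFinset hn 1).mp hζ))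
    exact pairwise_coprime_X_sub_C (s := id) Function.injective_id hab

theorem Complex.forall_pow_eq_one_imp_eq_one_iff {m : ℕ} (hm : m ≠ 0) :
    (∀ ζ : ℂ, ζ ^ m = 1 → ζ = 1) ↔ m = 1 := by
  refine ⟨fun h => ?_, fun h ζ hζ => by rwa [h, pow_one] at hζ⟩
  obtain ⟨ω, hω⟩ : ∃ ω : ℂ, IsPrimitiveRoot ω m := ⟨_, Complex.isPrimitiveRoot_exp m hm⟩
  rw [h ω hω.pow_eq_one] at hω
  exact hω.unique IsPrimitiveRoot.one

theorem Nat.gcd_eq_one_iff_forall_pow_eq_one_orderOf_dvd {k n : ℕ} (hn : n ≠ 0) :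
    Nat.gcd k n = 1 ↔ ∀ ζ : ℂ, ζ ^ n = 1 → orderOf ζ ∣ k → ζ = 1 := by
  rw [← Complex.forall_pow_eq_one_imp_eq_one_iff (Nat.gcd_ne_zero_right hn)]
  simp only [← orderOf_dvd_iff_pow_eq_one, Nat.dvd_gcd_iff, and_imp]
  exact forall_congr' fun _ => forall_comm

/-- For `1 ≤ k ≤ n-1`, the stringy E-function
`binom(n,k)_q · (q-1)·q^n/(q^n-1)` is a polynomial iff `gcd(k,n) = 1`. -/
theorem stringy_E_polynomial_iff_coprime (n k : ℕ) (hk1 : 1 ≤ k) (hkn : k ≤ n - 1)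
    (P : Polynomial ℤ) (hP : P * gaussDen k = gaussNum n k) :
    ((X : Polynomial ℤ) ^ n - 1 ∣ P * (X - 1) * X ^ n) ↔ Nat.gcd k n = 1 := by
  have hn : n ≠ 0 := by omega
  have hmonic : ((X : ℤ[X]) ^ n - 1).Monic := by simpa using monic_X_pow_sub_C (1 : ℤ) hn
  rw [← map_dvd_map (Int.castRingHom ℂ) Int.cast_injective hmonic,
    Nat.gcd_eq_one_iff_forall_pow_eq_one_orderOf_dvd hn]
  simp only [Polynomial.map_mul, Polynomial.map_sub, Polynomial.map_pow, map_X, Polynomial.map_one]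
  rw [X_pow_sub_one_dvd_iff_forall_isRoot (Complex.isPrimitiveRoot_exp n hn) (Nat.pos_of_ne_zero hn)]
  refine forall_congr' fun ζ => imp_congr_right fun hζ => ?_
  simp only [IsRoot.def, eval_mul, eval_sub, eval_pow, eval_X, eval_one, hζ, mul_one,
    mul_eq_zero, sub_eq_zero]
  rw [← IsRoot.def, isRoot_map_iff_of_mul_gaussDen_eq_gaussNum (by omega) hP hζ]
  tauto
end

section
/- Let 1 < k < n-1 with gcd(k,n) = 1. Then the stringy E-function E_st(X;q) = binom(n,k)_q · (q-1)·q^n/(q^n-1) of the cone over Gr(k,n) is a polynomial with nonnegative integer coefficients whose value at q = 1 equals C(n,k)/n. -/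
open Polynomial Finset

/-!
Write `n = w + k`. The polynomial `P` is the Gaussian binomial `[n choose k]_q`, the generating
function of partitions in a `k × w` box (multisets of `k` numbers in `[0, w]`, weighted by their
sum); up to a power of `q` it is also `∑ q^(ΣS)` over the `k`-subsets `S` of `ℤ/n`. Rotating
every `S` by one step permutes these subsets and shifts `ΣS` by `k` modulo `n`, so `q^n - 1`
divides `(q^k - 1) P`; as `k` is invertible modulo `n`, it divides `(q - 1) P`, i.e.
`P = [n]_q Q'` with `[n]_q = 1 + q + ⋯ + q^(n-1)`, and `Q = q^n Q'`.

The coefficients of `Q'` obey `Q'_i = Q'_(i-n) + P_i - P_(i-1)`. Read upwards below the middle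
of `P` and downwards above it, this makes them nonnegative because the coefficients of `P` are
symmetric and unimodal. Unimodality is Sylvester's theorem: multisets span `Sym^k` of the
irreducible `(w+1)`-dimensional `sl₂`-module, on which the raising operator is injective on
weight spaces of negative weight. Finally `n Q(1) = P(1) = C(n, k)`.
-/

theorem gaussDen_ne_zero (k : ℕ) : gaussDen k ≠ 0 := by
  refine Finset.prod_ne_zero_iff.mpr fun i _ h => ?_
  simpa using congrArg (coeff · 0) h

theorem gaussNum_self (k : ℕ) : gaussNum k k = gaussDen k := by
  rw [gaussNum, gaussDen, ← prod_range_reflect]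
  refine prod_congr rfl fun i hi => ?_
  rw [mem_range] at hi
  congr 2
  omega

theorem gaussNum_succ_succ (n k : ℕ) :
    gaussNum (n + 1) (k + 1) = (1 - X ^ (n + 1)) * gaussNum n k := by
  rw [gaussNum, gaussNum, prod_range_succ', Nat.sub_zero, mul_comm]
  congr 1
  exact prod_congr rfl fun i _ => by rw [Nat.add_sub_add_right]

theorem gaussNum_succ (n k : ℕ) : gaussNum n (k + 1) = gaussNum n k * (1 - X ^ (n - k)) :=
  prod_range_succ _ _

theorem gaussDen_succ (k : ℕ) : gaussDen (k + 1) = gaussDen k * (1 - X ^ (k + 1)) :=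
  prod_range_succ _ _

theorem gaussNum_eq_zero {n k : ℕ} (h : n < k) : gaussNum n k = 0 :=
  prod_eq_zero (mem_range.mpr h) (by simp)

/-! ### Gaussian binomials as generating functions of partitions in a box -/

def boxMultisets (w k : ℕ) : Finset (Multiset ℕ) :=
  ((range (w + 1)).sym k).image (↑)

theorem mem_boxMultisets {w k : ℕ} {m : Multiset ℕ} :
    m ∈ boxMultisets w k ↔ Multiset.card m = k ∧ ∀ x ∈ m, x ≤ w := by
  simp only [boxMultisets, mem_image, mem_sym_iff, mem_range, Nat.lt_succ_iff]
  constructor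
  · rintro ⟨s, hs, rfl⟩
    exact ⟨s.2, hs⟩
  · rintro ⟨hk, hw⟩
    exact ⟨⟨m, hk⟩, hw, rfl⟩

noncomputable def boxPartitionPoly (w k : ℕ) : ℤ[X] :=
  ∑ m ∈ boxMultisets w k, X ^ m.sum

theorem boxMultisets_zero_right (w : ℕ) : boxMultisets w 0 = {0} := by
  ext m
  simp +contextual [mem_boxMultisets, Multiset.card_eq_zero]

theorem boxMultisets_zero_left (k : ℕ) : boxMultisets 0 k = {Multiset.replicate k 0} := by
  ext m
  simp [mem_boxMultisets, Multiset.eq_replicate, eq_comm]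

theorem boxPartitionPoly_zero_right (w : ℕ) : boxPartitionPoly w 0 = 1 := by
  simp [boxPartitionPoly, boxMultisets_zero_right]

theorem boxPartitionPoly_zero_left (k : ℕ) : boxPartitionPoly 0 k = 1 := by
  simp [boxPartitionPoly, boxMultisets_zero_left]

theorem boxPartitionPoly_succ_succ (w k : ℕ) :
    boxPartitionPoly (w + 1) (k + 1) =
      boxPartitionPoly w (k + 1) + X ^ (w + 1) * boxPartitionPoly (w + 1) k := by
  have hnot : (boxMultisets (w + 1) (k + 1)).filter (w + 1 ∉ ·) = boxMultisets w (k + 1) := by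
    ext m
    simp only [mem_filter, mem_boxMultisets]
    constructor
    · rintro ⟨⟨hk, hw⟩, hm⟩
      exact ⟨hk, fun x hx => Nat.le_of_lt_succ <| (hw x hx).lt_of_ne fun h => hm (h ▸ hx)⟩
    · rintro ⟨hk, hw⟩
      exact ⟨⟨hk, fun x hx => (hw x hx).trans w.le_succ⟩, fun h => by have := hw _ h; omega⟩
  have hin : (boxMultisets (w + 1) (k + 1)).filter (w + 1 ∈ ·) =
      (boxMultisets (w + 1) k).image (Multiset.cons (w + 1)) := by
    ext m
    simp only [mem_filter, mem_image, mem_boxMultisets]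
    constructor
    · rintro ⟨⟨hk, hw⟩, hm⟩
      refine ⟨m.erase (w + 1), ⟨?_, fun x hx => hw x (Multiset.mem_of_mem_erase hx)⟩,
        Multiset.cons_erase hm⟩
      rw [Multiset.card_erase_of_mem hm, hk, Nat.pred_succ]
    · rintro ⟨a, ⟨hk, hw⟩, rfl⟩
      refine ⟨⟨by simp [hk], fun x hx => ?_⟩, Multiset.mem_cons_self _ _⟩
      rcases Multiset.mem_cons.mp hx with rfl | hx
      exacts [le_rfl, hw x hx]
  rw [boxPartitionPoly, ← sum_filter_not_add_sum_filter _ (w + 1 ∈ ·), hnot, hin,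
    sum_image fun _ _ _ _ h => Multiset.cons_inj_right _ |>.mp h, boxPartitionPoly,
    boxPartitionPoly, mul_sum]
  simp [pow_add]

theorem boxPartitionPoly_mul_gaussDen :
    ∀ w k : ℕ, boxPartitionPoly w k * gaussDen k = gaussNum (w + k) k
  | 0, k => by rw [boxPartitionPoly_zero_left, one_mul, zero_add, gaussNum_self]
  | w + 1, 0 => by simp [boxPartitionPoly_zero_right, gaussDen, gaussNum]
  | w + 1, k + 1 => by
    have h₁ := boxPartitionPoly_mul_gaussDen w (k + 1)
    have h₂ := boxPartitionPoly_mul_gaussDen (w + 1) k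
    rw [show w + (k + 1) = w + k + 1 by omega, gaussNum_succ, show w + k + 1 - k = w + 1 by omega]
      at h₁
    rw [show w + 1 + k = w + k + 1 by omega] at h₂
    rw [show w + 1 + (k + 1) = w + k + 1 + 1 by omega, gaussNum_succ_succ,
      boxPartitionPoly_succ_succ, add_mul, h₁, gaussDen_succ, ← mul_assoc, mul_assoc (X ^ _), h₂]
    ring

theorem coeff_boxPartitionPoly (w k j : ℕ) :
    (boxPartitionPoly w k).coeff j = #{m ∈ boxMultisets w k | m.sum = j} := by
  rw [boxPartitionPoly, finsetSum_coeff, card_filter, Nat.cast_sum]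
  simp [coeff_X_pow, eq_comm]

theorem coeff_boxPartitionPoly_nonneg (w k j : ℕ) : 0 ≤ (boxPartitionPoly w k).coeff j := by
  rw [coeff_boxPartitionPoly]
  positivity

theorem sum_le_of_mem_boxMultisets {w k : ℕ} {m : Multiset ℕ} (hm : m ∈ boxMultisets w k) :
    m.sum ≤ k * w := by
  obtain ⟨hk, hw⟩ := mem_boxMultisets.mp hm
  simpa [hk] using Multiset.sum_le_card_nsmul m w hw

theorem coeff_boxPartitionPoly_eq_zero {w k j : ℕ} (h : k * w < j) :
    (boxPartitionPoly w k).coeff j = 0 := by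
  rw [coeff_boxPartitionPoly, Nat.cast_eq_zero, card_eq_zero, filter_eq_empty_iff]
  exact fun m hm hj => (sum_le_of_mem_boxMultisets hm).not_gt (hj ▸ h)

theorem Multiset.sum_map_sub_add_sum {w : ℕ} {m : Multiset ℕ} (hw : ∀ x ∈ m, x ≤ w) :
    (m.map (w - ·)).sum + m.sum = card m * w := by
  calc (m.map (w - ·)).sum + m.sum = (m.map fun x => w - x + x).sum := by
        rw [sum_map_add, map_id']
    _ = (m.map fun _ => w).sum := by
        rw [map_congr rfl fun x hx => Nat.sub_add_cancel (hw x hx)]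
    _ = card m * w := by simp

theorem Multiset.map_sub_map_sub {w : ℕ} {m : Multiset ℕ} (hw : ∀ x ∈ m, x ≤ w) :
    (m.map (w - ·)).map (w - ·) = m := by
  rw [map_map]
  conv_rhs => rw [← map_id m]
  exact map_congr rfl fun x hx => Nat.sub_sub_self (hw x hx)

theorem map_sub_mem_boxMultisets {w k : ℕ} {m : Multiset ℕ} (hm : m ∈ boxMultisets w k) :
    m.map (w - ·) ∈ boxMultisets w k := by
  obtain ⟨hk, hw⟩ := mem_boxMultisets.mp hm
  exact mem_boxMultisets.mpr ⟨by simp [hk], by simp⟩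

theorem coeff_boxPartitionPoly_symm {w k j : ℕ} (h : j ≤ k * w) :
    (boxPartitionPoly w k).coeff j = (boxPartitionPoly w k).coeff (k * w - j) := by
  have hsum {m} (hm : m ∈ boxMultisets w k) : (m.map (w - ·)).sum + m.sum = k * w := by
    obtain ⟨hk, hw⟩ := mem_boxMultisets.mp hm
    rw [Multiset.sum_map_sub_add_sum hw, hk]
  have hmaps {i} (hi : i ≤ k * w) {m} (hm : m ∈ {m ∈ boxMultisets w k | m.sum = i}) :
      m.map (w - ·) ∈ {m ∈ boxMultisets w k | m.sum = k * w - i} := by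
    obtain ⟨hbox, rfl⟩ := mem_filter.mp hm
    exact mem_filter.mpr ⟨map_sub_mem_boxMultisets hbox, by have := hsum hbox; omega⟩
  have hinv {i} {m} (hm : m ∈ {m ∈ boxMultisets w k | m.sum = i}) :
      (m.map (w - ·)).map (w - ·) = m :=
    Multiset.map_sub_map_sub (mem_boxMultisets.mp (mem_filter.mp hm).1).2
  rw [coeff_boxPartitionPoly, coeff_boxPartitionPoly, Nat.cast_inj]
  refine card_nbij' (·.map (w - ·)) (·.map (w - ·)) (fun m hm => hmaps h hm)
    (fun m hm => ?_) (fun m hm => hinv hm) (fun m hm => hinv hm)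
  simpa [Nat.sub_sub_self h] using hmaps (Nat.sub_le _ _) hm

/-! ### The `sl₂`-action on multisets -/

theorem Finsupp.supported_le_of_single_mem {α R : Type*} [Semiring R] {s : Set α}
    {p : Submodule R (α →₀ R)} (h : ∀ a ∈ s, single a 1 ∈ p) : supported R R s ≤ p := by
  rw [supported_eq_span_single, Submodule.span_le]
  rintro _ ⟨a, ha, rfl⟩
  exact h a ha

theorem Finsupp.finrank_supported_finset {R α : Type*} [Semiring R] [StrongRankCondition R]
    (s : Finset α) : Module.finrank R (supported R R (s : Set α)) = #s := by
  rw [(Finsupp.supportedEquivFinsupp _).finrank_eq, Module.finrank_finsupp_self]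
  simp

theorem Multiset.sum_map_sum_map_erase_comm {α M : Type*} [DecidableEq α] [AddCommMonoid M]
    (m : Multiset α) (t : α → α → M) :
    (m.map fun x => ((m.erase x).map (t x)).sum).sum =
      (m.map fun y => ((m.erase y).map fun x => t x y).sum).sum := by
  induction m using Multiset.induction with
  | empty => simp
  | cons a s ih =>
    have erase_cons {x} (hx : x ∈ s) : (a ::ₘ s).erase x = a ::ₘ s.erase x := by
      rcases eq_or_ne x a with rfl | hxa
      · rw [Multiset.erase_cons_head, Multiset.cons_erase hx]
      · exact Multiset.erase_cons_tail s (Ne.symm hxa)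
    have hL : s.map (fun x => (((a ::ₘ s).erase x).map (t x)).sum) =
        s.map fun x => t x a + ((s.erase x).map (t x)).sum :=
      Multiset.map_congr rfl fun x hx => by rw [erase_cons hx, Multiset.map_cons, Multiset.sum_cons]
    have hR : s.map (fun y => (((a ::ₘ s).erase y).map fun x => t x y).sum) =
        s.map fun y => t a y + ((s.erase y).map fun x => t x y).sum :=
      Multiset.map_congr rfl fun y hy => by rw [erase_cons hy, Multiset.map_cons, Multiset.sum_cons]
    simp only [Multiset.map_cons, Multiset.sum_cons, Multiset.erase_cons_head, hL, hR,
      Multiset.sum_map_add, ih]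
    abel

theorem IsSl2Triple.HasPrimitiveVectorWith.exists_nat_of_pow_toEnd_f_eq_zero
    {R L M : Type*} [CommRing R] [LieRing L] [LieAlgebra R L] [AddCommGroup M] [Module R M]
    [LieRingModule L M] [LieModule R L M] [IsDomain R] [CharZero R] [Module.IsTorsionFree R M]
    {h e f : L} {t : IsSl2Triple h e f} {m : M} {μ : R} (P : t.HasPrimitiveVectorWith m μ)
    {N : ℕ} (hN : (LieModule.toEnd R L M f ^ N) m = 0) : ∃ n : ℕ, μ = n := by
  obtain ⟨n, hn₁, hn₂⟩ := Nat.exists_not_and_succ_of_not_zero_of_exists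
    (p := fun n => (LieModule.toEnd R L M f ^ n) m = 0) P.ne_zero ⟨N, hN⟩
  refine ⟨n, ?_⟩
  have := P.lie_e_pow_succ_toEnd_f n
  rw [hn₂, lie_zero, eq_comm, smul_eq_zero_iff_left hn₁, mul_eq_zero, sub_eq_zero] at this
  exact this.resolve_left <| Nat.cast_add_one_ne_zero n

/- A multiset `m` stands for the monomial `∏_{x ∈ m} z_x`, and `e`, `f`, `h` act as the
derivations with `e z_x = (w - x) z_(x+1)`, `f z_x = x z_(x-1)`, `h z_x = (2x - w) z_x`. -/
namespace MultisetSl2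

local notation "V" => Multiset ℕ →₀ ℚ

attribute [local instance] LieRing.ofAssociativeRing

def incr (x : ℕ) (m : Multiset ℕ) : Multiset ℕ := (x + 1) ::ₘ m.erase x

def decr (x : ℕ) (m : Multiset ℕ) : Multiset ℕ := (x - 1) ::ₘ m.erase x

theorem card_incr {x : ℕ} {m : Multiset ℕ} (hx : x ∈ m) :
    Multiset.card (incr x m) = Multiset.card m := by
  rw [incr, Multiset.card_cons, Multiset.card_erase_add_one hx]

theorem card_decr {x : ℕ} {m : Multiset ℕ} (hx : x ∈ m) :
    Multiset.card (decr x m) = Multiset.card m := by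
  rw [decr, Multiset.card_cons, Multiset.card_erase_add_one hx]

theorem sum_incr {x : ℕ} {m : Multiset ℕ} (hx : x ∈ m) : (incr x m).sum = m.sum + 1 := by
  rw [← Multiset.cons_erase hx, incr, Multiset.erase_cons_head, Multiset.sum_cons,
    Multiset.sum_cons]
  ring

theorem sum_decr {x : ℕ} {m : Multiset ℕ} (hx : x ∈ m) (hx₀ : x ≠ 0) :
    (decr x m).sum + 1 = m.sum := by
  rw [← Multiset.cons_erase hx, decr, Multiset.erase_cons_head, Multiset.sum_cons,
    Multiset.sum_cons]
  omega

theorem incr_pred_decr {x : ℕ} {m : Multiset ℕ} (hx : x ∈ m) (hx₀ : x ≠ 0) :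
    incr (x - 1) (decr x m) = m := by
  rw [incr, decr, Multiset.erase_cons_head, Nat.sub_add_cancel (Nat.one_le_iff_ne_zero.mpr hx₀),
    Multiset.cons_erase hx]

theorem decr_succ_incr {y : ℕ} {m : Multiset ℕ} (hy : y ∈ m) : decr (y + 1) (incr y m) = m := by
  rw [incr, decr, Multiset.erase_cons_head, Nat.add_sub_cancel, Multiset.cons_erase hy]

theorem decr_incr_comm {x y : ℕ} {m : Multiset ℕ} (hy : y ∈ m) (hx : x ∈ m.erase y)
    (hx₀ : x ≠ 0) : decr x (incr y m) = incr y (decr x m) := by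
  by_cases hxy : x = y + 1
  · subst hxy
    rw [decr_succ_incr hy, incr, decr, Nat.add_sub_cancel, Multiset.erase_cons_head,
      Multiset.cons_erase (Multiset.mem_of_mem_erase hx)]
  · rw [incr, decr, incr, decr, Multiset.erase_cons_tail _ (Ne.symm hxy),
      Multiset.erase_cons_tail _ (by omega), Multiset.erase_comm, Multiset.cons_swap]

noncomputable def raise (w : ℕ) (m : Multiset ℕ) : V :=
  (m.map fun x : ℕ => ((w : ℚ) - x) • Finsupp.single (incr x m) 1).sum

noncomputable def lower (m : Multiset ℕ) : V :=
  (m.map fun x : ℕ => (x : ℚ) • Finsupp.single (decr x m) 1).sum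

def weight (w : ℕ) (m : Multiset ℕ) : ℚ := 2 * m.sum - Multiset.card m * w

noncomputable def e (w : ℕ) : Module.End ℚ V := Finsupp.linearCombination ℚ (raise w)

noncomputable def f : Module.End ℚ V := Finsupp.linearCombination ℚ lower

noncomputable def h (w : ℕ) : Module.End ℚ V :=
  Finsupp.linearCombination ℚ fun m => weight w m • Finsupp.single m 1

theorem e_single (w : ℕ) (m : Multiset ℕ) (c : ℚ) : e w (Finsupp.single m c) = c • raise w m :=
  Finsupp.linearCombination_single _ _ _

theorem f_single (m : Multiset ℕ) (c : ℚ) : f (Finsupp.single m c) = c • lower m :=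
  Finsupp.linearCombination_single _ _ _

theorem h_single (w : ℕ) (m : Multiset ℕ) (c : ℚ) :
    h w (Finsupp.single m c) = (c * weight w m) • Finsupp.single m 1 := by
  rw [h, Finsupp.linearCombination_single, smul_smul]

theorem h_apply_of_mem_supported {w : ℕ} {μ : ℚ} {v : V}
    (hv : v ∈ Finsupp.supported ℚ ℚ {m | weight w m = μ}) : h w v = μ • v := by
  refine Module.End.mem_eigenspace_iff.mp (Finsupp.supported_le_of_single_mem (fun m hm => ?_) hv)
  rw [Module.End.mem_eigenspace_iff, h_single, one_mul, hm]

theorem raise_mem_supported (w : ℕ) (m : Multiset ℕ) :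
    raise w m ∈ Finsupp.supported ℚ ℚ {p | Multiset.card p = Multiset.card m ∧
      p.sum = m.sum + 1 ∧ ((∀ x ∈ m, x ≤ w) → ∀ y ∈ p, y ≤ w)} := by
  refine multiset_sum_mem _ fun _ hv => ?_
  obtain ⟨x, hx, rfl⟩ := Multiset.mem_map.mp hv
  rcases eq_or_ne x w with rfl | hxw
  · simp
  refine Submodule.smul_mem _ _ (Finsupp.single_mem_supported ℚ _ ⟨card_incr hx, sum_incr hx, ?_⟩)
  intro hm y hy
  rcases Multiset.mem_cons.mp hy with rfl | hy
  · exact lt_of_le_of_ne (hm x hx) hxw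
  · exact hm y (Multiset.mem_of_mem_erase hy)

theorem lower_mem_supported (m : Multiset ℕ) :
    lower m ∈ Finsupp.supported ℚ ℚ
      {p | Multiset.card p = Multiset.card m ∧ p.sum + 1 = m.sum} := by
  refine multiset_sum_mem _ fun _ hv => ?_
  obtain ⟨x, hx, rfl⟩ := Multiset.mem_map.mp hv
  rcases eq_or_ne x 0 with rfl | hx₀
  · simp
  exact Submodule.smul_mem _ _
    (Finsupp.single_mem_supported ℚ _ ⟨card_decr hx, sum_decr hx hx₀⟩)

theorem weight_eq_sum (w : ℕ) (m : Multiset ℕ) :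
    weight w m = (m.map fun x : ℕ => 2 * (x : ℚ) - w).sum := by
  simp [weight, Multiset.sum_map_sub, Multiset.sum_map_mul_left, Nat.cast_multiset_sum]

theorem raise_decr (w : ℕ) {x : ℕ} {m : Multiset ℕ} (hx : x ∈ m) (hx₀ : x ≠ 0) :
    raise w (decr x m) = ((w : ℚ) - x + 1) • Finsupp.single m 1 +
      ((m.erase x).map fun y : ℕ => ((w : ℚ) - y) • Finsupp.single (incr y (decr x m)) 1).sum := by
  conv_lhs => rw [raise, decr, Multiset.map_cons, Multiset.sum_cons, ← decr]
  rw [incr_pred_decr hx hx₀, Nat.cast_pred (Nat.pos_of_ne_zero hx₀)]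
  congr 2
  ring

theorem lower_incr {y : ℕ} {m : Multiset ℕ} (hy : y ∈ m) :
    lower (incr y m) = ((y : ℚ) + 1) • Finsupp.single m 1 +
      ((m.erase y).map fun x : ℕ => (x : ℚ) • Finsupp.single (decr x (incr y m)) 1).sum := by
  conv_lhs => rw [lower, incr, Multiset.map_cons, Multiset.sum_cons, ← incr]
  rw [decr_succ_incr hy, Nat.cast_succ]

theorem e_lower (w : ℕ) (m : Multiset ℕ) :
    e w (lower m) = weight w m • Finsupp.single m 1 + f (raise w m) := by
  set T : ℕ → ℕ → V := fun x y => ((x : ℚ) * (w - y)) • Finsupp.single (incr y (decr x m)) 1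
  have he : e w (lower m) = (m.map fun x : ℕ => ((x : ℚ) * (w - x + 1)) • Finsupp.single m 1).sum
      + (m.map fun x => ((m.erase x).map (T x)).sum).sum := by
    rw [lower, map_multiset_sum, Multiset.map_map, ← Multiset.sum_map_add]
    refine congrArg _ (Multiset.map_congr rfl fun x hx => ?_)
    rcases eq_or_ne x 0 with rfl | hx₀
    · simp [T]
    simp only [Function.comp_apply, map_smul, e_single, one_smul, raise_decr w hx hx₀, smul_add,
      smul_smul, Multiset.smul_sum, Multiset.map_map, one_mul]
    rfl
  have hf : f (raise w m) = (m.map fun y : ℕ => (((w : ℚ) - y) * (y + 1)) • Finsupp.single m 1).sum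
      + (m.map fun y => ((m.erase y).map fun x => T x y).sum).sum := by
    rw [raise, map_multiset_sum, Multiset.map_map, ← Multiset.sum_map_add]
    refine congrArg _ (Multiset.map_congr rfl fun y hy => ?_)
    simp only [Function.comp_apply, map_smul, f_single, lower_incr hy, one_smul, smul_add,
      smul_smul, Multiset.smul_sum, Multiset.map_map, one_mul]
    refine congrArg (_ + ·) (congrArg Multiset.sum (Multiset.map_congr rfl fun x hx => ?_))
    rcases eq_or_ne x 0 with rfl | hx₀
    · simp [T]
    simp only [T, decr_incr_comm hy hx hx₀, mul_comm]
  -- the off-diagonal terms of `e f` and `f e` agree after exchanging `x` and `y`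
  rw [he, hf, Multiset.sum_map_sum_map_erase_comm, weight_eq_sum, Multiset.sum_smul,
    Multiset.map_map]
  have hdiag : ∀ x : ℕ, ((x : ℚ) * (w - x + 1)) • Finsupp.single m (1 : ℚ) =
      (2 * (x : ℚ) - w) • Finsupp.single m 1 + (((w : ℚ) - x) * (x + 1)) • Finsupp.single m 1 := by
    intro x
    rw [← add_smul]
    ring_nf
  simp only [Function.comp_apply, hdiag, Multiset.sum_map_add]
  abel

theorem h_raise (w : ℕ) (m : Multiset ℕ) : h w (raise w m) = (weight w m + 2) • raise w m := by
  refine h_apply_of_mem_supported <| Finsupp.supported_mono ?_ (raise_mem_supported w m)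
  rintro p ⟨hc, hs, -⟩
  simp only [Set.mem_ofPred_eq, weight, hc, hs]
  push_cast
  ring

theorem h_lower (w : ℕ) (m : Multiset ℕ) : h w (lower m) = (weight w m - 2) • lower m := by
  refine h_apply_of_mem_supported <| Finsupp.supported_mono ?_ (lower_mem_supported m)
  rintro p ⟨hc, hs⟩
  simp only [Set.mem_ofPred_eq, weight, hc, ← hs]
  push_cast
  ring

theorem isSl2Triple (w : ℕ) : IsSl2Triple (h w) (e w) f where
  h_ne_zero hw := by
    have := congrArg (· {w + 1}) (LinearMap.congr_fun hw (Finsupp.single {w + 1} 1))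
    simp [h_single, weight] at this
    linarith
  lie_e_f := Finsupp.lhom_ext fun m c => by
    rw [LieRing.of_associative_ring_bracket, LinearMap.sub_apply, Module.End.mul_apply,
      Module.End.mul_apply, f_single, map_smul, e_lower, e_single, map_smul, h_single]
    module
  lie_h_e_nsmul := Finsupp.lhom_ext fun m c => by
    rw [LieRing.of_associative_ring_bracket, LinearMap.sub_apply, Module.End.mul_apply,
      Module.End.mul_apply, e_single, map_smul, h_raise, h_single, map_smul, e_single,
      LinearMap.smul_apply, e_single, one_smul]
    module
  lie_h_f_nsmul := Finsupp.lhom_ext fun m c => by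
    rw [LieRing.of_associative_ring_bracket, LinearMap.sub_apply, Module.End.mul_apply,
      Module.End.mul_apply, f_single, map_smul, h_lower, h_single, map_smul, f_single,
      LinearMap.neg_apply, LinearMap.smul_apply, f_single, one_smul]
    module

theorem f_pow_mem_supported {j : ℕ} {v : V} (hv : v ∈ Finsupp.supported ℚ ℚ {m | m.sum = j}) :
    ∀ t, (f ^ t) v ∈ Finsupp.supported ℚ ℚ {m | m.sum + t = j}
  | 0 => hv
  | t + 1 => by
    rw [pow_succ', Module.End.mul_apply]
    refine Submodule.mem_comap.mp <| Finsupp.supported_le_of_single_mem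
      (p := Submodule.comap f (Finsupp.supported ℚ ℚ _)) (fun m hm => ?_) (f_pow_mem_supported hv t)
    rw [Submodule.mem_comap, f_single, one_smul]
    refine Finsupp.supported_mono (fun p (hp : _ ∧ _) => ?_) (lower_mem_supported m)
    simp only [Set.mem_ofPred_eq] at hm ⊢
    omega

theorem eq_zero_of_e_eq_zero {w k j : ℕ} (hj : 2 * j < k * w) {v : V}
    (hv : v ∈ Finsupp.supported ℚ ℚ {m | Multiset.card m = k ∧ m.sum = j}) (he : e w v = 0) :
    v = 0 := by
  by_contra hv₀
  have P : (isSl2Triple w).HasPrimitiveVectorWith v (2 * j - k * w : ℚ) :=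
    { ne_zero := hv₀
      lie_h := h_apply_of_mem_supported <| Finsupp.supported_mono
        (fun m (hm : _ ∧ _) => by simp [weight, hm.1, ← hm.2, Nat.cast_multiset_sum]) hv
      lie_e := he }
  have hf : (f ^ (j + 1)) v = 0 := by
    have := f_pow_mem_supported (Finsupp.supported_mono (fun m hm => hm.2) hv) (j + 1)
    rwa [show {m : Multiset ℕ | m.sum + (j + 1) = j} = ∅ by ext; simp; omega,
      Finsupp.supported_empty, Submodule.mem_bot] at this
  obtain ⟨n, hn⟩ := P.exists_nat_of_pow_toEnd_f_eq_zero (N := j + 1)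
    (by rwa [LieModule.toEnd_module_end])
  have : (2 * j : ℚ) < k * w := by exact_mod_cast hj
  linarith [n.cast_nonneg (α := ℚ)]

end MultisetSl2

theorem card_filter_sum_le_card_filter_sum_succ {w k j : ℕ} (hj : 2 * j < k * w) :
    #{m ∈ boxMultisets w k | m.sum = j} ≤ #{m ∈ boxMultisets w k | m.sum = j + 1} := by
  set A := {m ∈ boxMultisets w k | m.sum = j}
  set B := {m ∈ boxMultisets w k | m.sum = j + 1}
  have hmaps : ∀ v ∈ Finsupp.supported ℚ ℚ (A : Set _),
      MultisetSl2.e w v ∈ Finsupp.supported ℚ ℚ (B : Set _) := by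
    refine fun v hv => Submodule.mem_comap.mp <| Finsupp.supported_le_of_single_mem
      (p := Submodule.comap (MultisetSl2.e w) _) (fun m hm => ?_) hv
    obtain ⟨hmbox, hmj⟩ := mem_filter.mp hm
    obtain ⟨hmk, hmw⟩ := mem_boxMultisets.mp hmbox
    rw [Submodule.mem_comap, MultisetSl2.e_single, one_smul]
    refine Finsupp.supported_mono (fun p (hp : _ ∧ _ ∧ _) => ?_)
      (MultisetSl2.raise_mem_supported w m)
    exact mem_filter.mpr ⟨mem_boxMultisets.mpr ⟨hp.1.trans hmk, hp.2.2 hmw⟩, hmj ▸ hp.2.1⟩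
  have hinj : Function.Injective ((MultisetSl2.e w).restrict hmaps) := by
    refine (injective_iff_map_eq_zero _).mpr fun v hv => Subtype.ext ?_
    refine MultisetSl2.eq_zero_of_e_eq_zero hj (Finsupp.supported_mono (fun m hm => ?_) v.2)
      (congrArg Subtype.val hv)
    obtain ⟨hmbox, hmj⟩ := mem_filter.mp hm
    exact ⟨(mem_boxMultisets.mp hmbox).1, hmj⟩
  have := Module.Finite.equiv
    (Finsupp.supportedEquivFinsupp (M := ℚ) (R := ℚ) (B : Set (Multiset ℕ))).symm
  simpa only [Finsupp.finrank_supported_finset] using LinearMap.finrank_le_finrank_of_injective hinj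

theorem coeff_boxPartitionPoly_le_succ {w k j : ℕ} (hj : 2 * j < k * w) :
    (boxPartitionPoly w k).coeff j ≤ (boxPartitionPoly w k).coeff (j + 1) := by
  rw [coeff_boxPartitionPoly, coeff_boxPartitionPoly]
  exact_mod_cast card_filter_sum_le_card_filter_sum_succ hj

theorem coeff_boxPartitionPoly_succ_le {w k j : ℕ} (hj : k * w ≤ 2 * j) :
    (boxPartitionPoly w k).coeff (j + 1) ≤ (boxPartitionPoly w k).coeff j := by
  rcases lt_or_ge j (k * w) with hlt | hge
  · rw [coeff_boxPartitionPoly_symm hlt.le, coeff_boxPartitionPoly_symm hlt,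
      show k * w - j = k * w - (j + 1) + 1 by omega]
    exact coeff_boxPartitionPoly_le_succ (by omega)
  · rw [coeff_boxPartitionPoly_eq_zero (by omega)]
    exact coeff_boxPartitionPoly_nonneg w k j

/-! ### Rotating subsets of `ℤ/n` -/

noncomputable def subsetSumPoly (n k : ℕ) : ℤ[X] :=
  ∑ S ∈ powersetCard k (range n), X ^ (∑ x ∈ S, x)

theorem subsetSumPoly_succ_succ (n k : ℕ) :
    subsetSumPoly (n + 1) (k + 1) = subsetSumPoly n (k + 1) + X ^ n * subsetSumPoly n k := by
  have hn : n ∉ range n := notMem_range_self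
  rw [subsetSumPoly, range_add_one, powersetCard_succ_insert hn, sum_union, sum_image,
    subsetSumPoly, subsetSumPoly, mul_sum]
  · congr 1
    refine sum_congr rfl fun S hS => ?_
    rw [sum_insert fun h => hn (mem_powersetCard.mp hS |>.1 h), pow_add]
  · intro S hS T hT hST
    have hnS : n ∉ S := fun h => hn (mem_powersetCard.mp hS |>.1 h)
    have hnT : n ∉ T := fun h => hn (mem_powersetCard.mp hT |>.1 h)
    rw [← erase_insert hnS, ← erase_insert hnT, hST]
  · refine disjoint_left.mpr fun S hS hS' => ?_
    obtain ⟨T, -, rfl⟩ := mem_image.mp hS'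
    exact hn (mem_powersetCard.mp hS |>.1 (mem_insert_self n T))

theorem subsetSumPoly_mul_gaussDen :
    ∀ n k : ℕ, subsetSumPoly n k * gaussDen k = X ^ (∑ i ∈ range k, i) * gaussNum n k
  | n, 0 => by simp [subsetSumPoly, gaussDen, gaussNum]
  | 0, k + 1 => by
    rw [gaussNum_eq_zero k.succ_pos, subsetSumPoly, range_zero,
      powersetCard_eq_empty.mpr k.succ_pos]
    simp
  | n + 1, k + 1 => by
    rw [subsetSumPoly_succ_succ, add_mul, subsetSumPoly_mul_gaussDen n (k + 1), gaussDen_succ,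
      ← mul_assoc, mul_assoc (X ^ n), subsetSumPoly_mul_gaussDen n k, gaussNum_succ_succ,
      gaussNum_succ, sum_range_succ]
    rcases lt_or_ge n k with hnk | hkn
    · simp [gaussNum_eq_zero hnk]
    · obtain ⟨d, rfl⟩ := Nat.exists_eq_add_of_le hkn
      rw [Nat.add_sub_cancel_left]
      ring

theorem subsetSumPoly_eval_one (n k : ℕ) : (subsetSumPoly n k).eval 1 = n.choose k := by
  simp [subsetSumPoly, eval_finsetSum]

theorem pow_sub_one_dvd_pow_sub_pow_of_modEq {R : Type*} [CommRing R] (x : R) {n a b : ℕ}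
    (h : a ≡ b [MOD n]) : x ^ n - 1 ∣ x ^ a - x ^ b := by
  wlog hba : b ≤ a generalizing a b
  · rw [← dvd_neg, neg_sub]
    exact this h.symm (le_of_not_ge hba)
  obtain ⟨t, ht⟩ := (Nat.modEq_iff_dvd' hba).mp h.symm
  rw [show a = b + n * t by omega, pow_add, ← mul_sub_one]
  exact (pow_one_sub_dvd_pow_mul_sub_one x n t).mul_left _

theorem pow_sub_one_dvd_sub_one_mul_of_coprime {R : Type*} [CommRing R] {x a : R} {n k : ℕ}
    (hn : n ≠ 0) (hkn : k.Coprime n) (h : x ^ n - 1 ∣ (x ^ k - 1) * a) :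
    x ^ n - 1 ∣ (x - 1) * a := by
  obtain ⟨u, -, hu⟩ := Nat.exists_mul_mod_eq_of_coprime 1 hkn hn
  have h₁ : x ^ n - 1 ∣ (x ^ (k * u) - 1) * a :=
    h.trans (mul_dvd_mul_right (pow_one_sub_dvd_pow_mul_sub_one x k u) a)
  have h₂ : x ^ n - 1 ∣ (x ^ (k * u) - x ^ 1) * a :=
    (pow_sub_one_dvd_pow_sub_pow_of_modEq x hu).mul_right a
  rw [show (x - 1) * a = (x ^ (k * u) - 1) * a - (x ^ (k * u) - x ^ 1) * a by ring]
  exact dvd_sub h₁ h₂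

theorem Nat.add_mod_add_mod_of_add_eq {n a b x : ℕ} (hab : a + b = n) (hx : x < n) :
    ((x + a) % n + b) % n = x := by
  rw [Nat.mod_add_mod, add_assoc, hab, Nat.add_mod_right, Nat.mod_eq_of_lt hx]

theorem image_add_mod_image_add_mod {n a b : ℕ} (hab : a + b = n) {S : Finset ℕ}
    (hS : S ⊆ range n) : ((S.image fun x => (x + a) % n).image fun x => (x + b) % n) = S := by
  rw [image_image]
  conv_rhs => rw [← image_id (s := S)]
  exact image_congr fun x hx => Nat.add_mod_add_mod_of_add_eq hab (mem_range.mp (hS hx))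

theorem injOn_add_mod {n a : ℕ} (ha : a ≤ n) : Set.InjOn (fun x => (x + a) % n) (range n) := by
  intro x hx y hy hxy
  rw [← Nat.add_mod_add_mod_of_add_eq (Nat.add_sub_of_le ha) (mem_range.mp hx),
    ← Nat.add_mod_add_mod_of_add_eq (Nat.add_sub_of_le ha) (mem_range.mp hy)]
  exact congrArg (fun z => (z + (n - a)) % n) hxy

theorem image_add_mod_mem_powersetCard {n a k : ℕ} (ha : a ≤ n) {S : Finset ℕ}
    (hS : S ∈ powersetCard k (range n)) :
    S.image (fun x => (x + a) % n) ∈ powersetCard k (range n) := by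
  obtain ⟨hSn, hSk⟩ := mem_powersetCard.mp hS
  refine mem_powersetCard.mpr ⟨fun y hy => ?_, ?_⟩
  · obtain ⟨x, hx, rfl⟩ := mem_image.mp hy
    exact mem_range.mpr (Nat.mod_lt _ (Nat.zero_lt_of_lt (mem_range.mp (hSn hx))))
  · rw [card_image_of_injOn ((injOn_add_mod ha).mono (coe_subset.mpr hSn)), hSk]

theorem sum_image_add_one_mod_modEq {n : ℕ} {S : Finset ℕ} (hS : S ⊆ range n) :
    ∑ y ∈ S.image (fun x => (x + 1) % n), y ≡ ∑ x ∈ S, x + #S [MOD n] := by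
  rcases S.eq_empty_or_nonempty with rfl | ⟨x, hx⟩
  · rfl
  have hn : 1 ≤ n := Nat.one_le_of_lt (mem_range.mp (hS hx))
  rw [sum_image ((injOn_add_mod hn).mono (coe_subset.mpr hS)), card_eq_sum_ones,
    ← sum_add_distrib]
  exact (sum_nat_mod _ _ _).symm

theorem X_pow_sub_one_dvd_mul_subsetSumPoly {n : ℕ} (hn : 0 < n) (k : ℕ) :
    (X ^ n - 1 : ℤ[X]) ∣ (X ^ k - 1) * subsetSumPoly n k := by
  have hrot : subsetSumPoly n k = ∑ S ∈ powersetCard k (range n),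
      X ^ (∑ y ∈ S.image (fun x => (x + 1) % n), y) := by
    rw [subsetSumPoly]
    refine (sum_nbij' (fun S : Finset ℕ => S.image fun x => (x + 1) % n)
      (fun S : Finset ℕ => S.image fun x => (x + (n - 1)) % n) ?_ ?_ ?_ ?_ fun _ _ => rfl).symm
    · exact fun S hS => image_add_mod_mem_powersetCard hn hS
    · exact fun S hS => image_add_mod_mem_powersetCard (Nat.sub_le n 1) hS
    · exact fun S hS => image_add_mod_image_add_mod (by omega) (mem_powersetCard.mp hS).1
    · exact fun S hS => image_add_mod_image_add_mod (by omega) (mem_powersetCard.mp hS).1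
  rw [sub_one_mul]
  nth_rewrite 2 [hrot]
  rw [subsetSumPoly, mul_sum, ← sum_sub_distrib]
  refine dvd_sum fun S hS => ?_
  rw [← pow_add, add_comm, ← (mem_powersetCard.mp hS).2]
  exact pow_sub_one_dvd_pow_sub_pow_of_modEq X
    (sum_image_add_one_mod_modEq (mem_powersetCard.mp hS).1).symm

theorem subsetSumPoly_eq_X_pow_mul_boxPartitionPoly (w k : ℕ) :
    subsetSumPoly (w + k) k = X ^ (∑ i ∈ range k, i) * boxPartitionPoly w k :=
  mul_right_cancel₀ (gaussDen_ne_zero k) <| by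
    rw [subsetSumPoly_mul_gaussDen, mul_assoc, boxPartitionPoly_mul_gaussDen]

theorem boxPartitionPoly_eval_one (w k : ℕ) : (boxPartitionPoly w k).eval 1 = (w + k).choose k := by
  simpa [subsetSumPoly_eval_one] using
    (congrArg (eval 1) (subsetSumPoly_eq_X_pow_mul_boxPartitionPoly w k)).symm

theorem geom_sum_dvd_boxPartitionPoly {w k : ℕ} (hpos : 0 < w + k) (hcop : k.Coprime (w + k)) :
    (∑ i ∈ range (w + k), X ^ i) ∣ boxPartitionPoly w k := by
  have hdvd : (X ^ (w + k) - 1 : ℤ[X]) ∣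
      X ^ (∑ i ∈ range k, i) * ((X - 1) * boxPartitionPoly w k) := by
    have := pow_sub_one_dvd_sub_one_mul_of_coprime hpos.ne' hcop
      (X_pow_sub_one_dvd_mul_subsetSumPoly hpos k)
    rwa [subsetSumPoly_eq_X_pow_mul_boxPartitionPoly, mul_left_comm] at this
  have hX : IsCoprime (X ^ (w + k) - 1 : ℤ[X]) (X ^ (∑ i ∈ range k, i)) := by
    refine IsCoprime.pow_right ⟨-1, X ^ (w + k - 1), ?_⟩
    rw [← pow_succ, Nat.sub_add_cancel hpos]
    ring
  have hX1 : (X - 1 : ℤ[X]) ≠ 0 := X_sub_C_ne_zero 1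
  have h := hX.dvd_of_dvd_mul_left hdvd
  rw [← geom_sum_mul, mul_comm] at h
  exact (mul_dvd_mul_iff_left hX1).mp h

/-! ### Dividing by `1 + q + ⋯ + q^(n-1)` -/

section QuotientByGeomSum

variable {P Q : ℤ[X]} {n : ℕ}

theorem coeff_eq_of_X_pow_sub_one_mul (h : (X ^ n - 1) * Q = P * (X - 1)) (i : ℕ) :
    Q.coeff i = (if n ≤ i then Q.coeff (i - n) else 0) + P.coeff i -
      (if 1 ≤ i then P.coeff (i - 1) else 0) := by
  have := congrArg (coeff · i) (show Q * X ^ n - Q = P * X ^ 1 - P by linear_combination h)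
  simp only [coeff_sub, coeff_mul_X_pow'] at this
  linarith

theorem coeff_eq_zero_of_X_pow_sub_one_mul (hn : 0 < n) (h : (X ^ n - 1) * Q = P * (X - 1))
    {d i : ℕ} (hdeg : P.natDegree ≤ d) (hi : d + 1 < i + n) : Q.coeff i = 0 := by
  rcases eq_or_ne Q 0 with rfl | hQ
  · exact coeff_zero i
  have hXn : (X ^ n - 1 : ℤ[X]) ≠ 0 := by simpa using X_pow_sub_C_ne_zero hn (1 : ℤ)
  have hdegQ : n + Q.natDegree ≤ d + 1 := by
    calc n + Q.natDegree = ((X ^ n - 1) * Q).natDegree := by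
          rw [natDegree_mul hXn hQ, ← C_1, natDegree_X_pow_sub_C]
      _ = (P * (X - C 1)).natDegree := by rw [h, C_1]
      _ ≤ P.natDegree + 1 := natDegree_mul_le.trans (by rw [natDegree_X_sub_C])
      _ ≤ d + 1 := by omega
  exact coeff_eq_zero_of_natDegree_lt (by omega)

theorem coeff_nonneg_of_X_pow_sub_one_mul (hn : 0 < n) (h : (X ^ n - 1) * Q = P * (X - 1))
    {d : ℕ} (hdeg : P.natDegree ≤ d) (h₀ : 0 ≤ P.coeff 0)
    (hmono : ∀ j, 2 * j < d → P.coeff j ≤ P.coeff (j + 1))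
    (hanti : ∀ j, d ≤ 2 * j → P.coeff (j + 1) ≤ P.coeff j) (i : ℕ) : 0 ≤ Q.coeff i := by
  have lower : ∀ i, 2 * i ≤ d → 0 ≤ Q.coeff i := by
    intro i
    induction i using Nat.strong_induction_on with
    | _ i ih =>
      intro hi
      have hQ : 0 ≤ if n ≤ i then Q.coeff (i - n) else 0 := by
        split_ifs
        exacts [ih _ (by omega) (by omega), le_rfl]
      have hP : (if 1 ≤ i then P.coeff (i - 1) else 0) ≤ P.coeff i := by
        split_ifs with hi₁
        · simpa [Nat.sub_add_cancel hi₁] using hmono (i - 1) (by omega)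
        · obtain rfl : i = 0 := by omega
          exact h₀
      linarith [coeff_eq_of_X_pow_sub_one_mul h i]
  have upper : ∀ m i, d + 1 - i = m → d < 2 * i → 0 ≤ Q.coeff i := by
    intro m
    induction m using Nat.strong_induction_on with
    | _ m ih =>
      intro i hm hi
      by_cases htop : d + 1 < i + n
      · rw [coeff_eq_zero_of_X_pow_sub_one_mul hn h hdeg htop]
      have hrec := coeff_eq_of_X_pow_sub_one_mul h (i + n)
      rw [if_pos (by omega), if_pos (by omega), Nat.add_sub_cancel] at hrec
      have hQ := ih _ (by omega) (i + n) rfl (by omega)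
      have hP := hanti (i + n - 1) (by omega)
      rw [Nat.sub_add_cancel (by omega)] at hP
      linarith
  rcases le_or_gt (2 * i) d with hi | hi
  exacts [lower i hi, upper _ i rfl hi]

end QuotientByGeomSum

theorem stringy_E_cone_grassmannian_general (n k : ℕ) (hkn : k < n - 1)
    (hcop : Nat.gcd k n = 1)
    (P : Polynomial ℤ) (hP : P * gaussDen k = gaussNum n k) :
    ∃ Q : Polynomial ℤ, Q * ((X : Polynomial ℤ) ^ n - 1) = P * (X - 1) * X ^ n ∧
      (∀ i, 0 ≤ Q.coeff i) ∧ Q.eval 1 * (n : ℤ) = n.choose k := by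
  obtain ⟨w, rfl⟩ : ∃ w, n = w + k := ⟨n - k, by omega⟩
  have hpos : 0 < w + k := by omega
  obtain rfl : P = boxPartitionPoly w k :=
    mul_right_cancel₀ (gaussDen_ne_zero k) (hP.trans (boxPartitionPoly_mul_gaussDen w k).symm)
  obtain ⟨Q, hQ⟩ := geom_sum_dvd_boxPartitionPoly hpos hcop
  have hXQ : (X ^ (w + k) - 1) * Q = boxPartitionPoly w k * (X - 1) := by
    rw [hQ, ← geom_sum_mul]
    ring
  refine ⟨Q * X ^ (w + k), by linear_combination X ^ (w + k) * hXQ, fun i => ?_, ?_⟩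
  · rw [coeff_mul_X_pow']
    split_ifs
    · exact coeff_nonneg_of_X_pow_sub_one_mul hpos hXQ
        (natDegree_le_iff_coeff_eq_zero.mpr fun j hj => coeff_boxPartitionPoly_eq_zero hj)
        (coeff_boxPartitionPoly_nonneg w k 0) (fun j => coeff_boxPartitionPoly_le_succ)
        (fun j => coeff_boxPartitionPoly_succ_le) _
    · exact le_rfl
  · have := congrArg (eval 1) hQ
    simp only [boxPartitionPoly_eval_one, eval_mul, eval_finsetSum, eval_pow, eval_X, one_pow,
      sum_const, card_range, nsmul_eq_mul, mul_one] at this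
    simp [this, mul_comm]

/-- For `1 < k < n-1` with `gcd(k,n) = 1`, the stringy E-function
`binom(n,k)_q·(q-1)·q^n/(q^n-1)` of the cone over `Gr(k,n)` is a polynomial with
nonnegative coefficients whose value at `q = 1` is `C(n,k)/n`. -/
theorem stringy_E_cone_grassmannian (n k : ℕ) (hk1 : 1 < k) (hkn : k < n - 1)
    (hcop : Nat.gcd k n = 1)
    (P : Polynomial ℤ) (hP : P * gaussDen k = gaussNum n k) :
    ∃ Q : Polynomial ℤ, Q * ((X : Polynomial ℤ) ^ n - 1) = P * (X - 1) * X ^ n ∧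
      (∀ i, 0 ≤ Q.coeff i) ∧ Q.eval 1 * (n : ℤ) = n.choose k :=
  stringy_E_cone_grassmannian_general n k hkn hcop P hP
end

section
/- For n = 2m even and k even with 0 < k < n, the rational function binom(n,k)_q·(q-1)·q^n/(q^n-1) is not a polynomial; in particular for k = 2, n = 4 the stringy E-function of the cone over Gr(2,4) is not a polynomial. -/
open Polynomial Finset

lemma one_sub_X_pow_ne_zero_s12 {d : ℕ} (hd : 0 < d) : (1 - X ^ d : Polynomial ℤ) ≠ 0 := by
  intro h
  have := congrArg (Polynomial.eval (0 : ℤ)) h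
  simp [zero_pow hd.ne'] at this

lemma rm_one_sub_X_pow_even {e : ℕ} (he : 0 < e) :
    rootMultiplicity (-1 : ℤ) (1 - X ^ (2 * e)) = 1 := by
  have hXp1 : (X + 1 : Polynomial ℤ) = X - C (-1 : ℤ) := by simp
  have key : (1 - X ^ (2 * e) : Polynomial ℤ) =
      (∑ i ∈ range e, (X ^ 2) ^ i) * ((1 - X) * (X + 1)) := by
    have h := geom_sum_mul (X ^ 2 : Polynomial ℤ) e
    rw [pow_mul]
    linear_combination h
  have hg : ((∑ i ∈ range e, (X ^ 2) ^ i : Polynomial ℤ)).eval (-1) = (e : ℤ) := by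
    simp [eval_finset_sum]
  have hgne : (∑ i ∈ range e, (X ^ 2) ^ i : Polynomial ℤ) ≠ 0 := by
    intro h
    rw [h] at hg
    simp at hg
    omega
  have h1 : (1 - X : Polynomial ℤ) ≠ 0 := by
    intro h
    have := congrArg (Polynomial.eval (0 : ℤ)) h
    simp at this
  have h2 : (X + 1 : Polynomial ℤ) ≠ 0 := by
    intro h
    have := congrArg (Polynomial.eval (0 : ℤ)) h
    simp at this
  rw [key, rootMultiplicity_mul (mul_ne_zero hgne (mul_ne_zero h1 h2)),
    rootMultiplicity_mul (mul_ne_zero h1 h2)]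
  rw [rootMultiplicity_eq_zero (by simp [IsRoot, hg]; omega : ¬ IsRoot _ (-1 : ℤ)),
    rootMultiplicity_eq_zero (by simp [IsRoot] : ¬ IsRoot (1 - X : Polynomial ℤ) (-1 : ℤ)),
    hXp1, rootMultiplicity_X_sub_C_self]

lemma rm_one_sub_X_pow {d : ℕ} (hd : 0 < d) :
    rootMultiplicity (-1 : ℤ) (1 - X ^ d) = if Even d then 1 else 0 := by
  by_cases h : Even d
  · obtain ⟨e, he⟩ := h
    have : d = 2 * e := by omega
    subst this
    rw [if_pos ⟨e, by ring⟩, rm_one_sub_X_pow_even (by omega)]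
  · rw [if_neg h]
    apply rootMultiplicity_eq_zero
    rw [Nat.not_even_iff_odd] at h
    simp [IsRoot, h.neg_one_pow]

lemma rm_prod (k : ℕ) (f : ℕ → Polynomial ℤ) (hf : ∀ i ∈ range k, f i ≠ 0) :
    rootMultiplicity (-1 : ℤ) (∏ i ∈ range k, f i) =
      ∑ i ∈ range k, rootMultiplicity (-1 : ℤ) (f i) := by
  induction k with
  | zero => simp
  | succ k ih =>
    have hne : (∏ i ∈ range k, f i) ≠ 0 :=
      Finset.prod_ne_zero_iff.mpr fun i hi => hf i (mem_range.2 (by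
        exact (mem_range.1 hi).trans (Nat.lt_succ_self k)))
    rw [Finset.prod_range_succ, Finset.sum_range_succ,
      rootMultiplicity_mul (mul_ne_zero hne (hf k (mem_range.2 (Nat.lt_succ_self k)))),
      ih (fun i hi => hf i (mem_range.2 ((mem_range.1 hi).trans (Nat.lt_succ_self k))))]

lemma parity_sum (j : ℕ) :
    ∑ i ∈ range (2 * j), (if Even i then (1 : ℕ) else 0) =
      ∑ i ∈ range (2 * j), (if Even (i + 1) then (1 : ℕ) else 0) := by
  induction j with
  | zero => simp
  | succ j ih =>
    have h : 2 * (j + 1) = (2 * j + 1) + 1 := by ring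
    rw [h, Finset.sum_range_succ, Finset.sum_range_succ, Finset.sum_range_succ,
      Finset.sum_range_succ, ih]
    have he : Even (2 * j) := ⟨j, by ring⟩
    simp [Nat.even_add_one, he, parity_simps]

/-- For `n = 2m` even and `k` even with `0 < k < n`, the stringy E-function
`binom(n,k)_q·(q-1)·q^n/(q^n-1)` is not a polynomial (e.g. for `Gr(2,4)`). -/
theorem stringy_E_not_polynomial_of_even (n m k : ℕ) (hn : n = 2 * m) (hk : 2 ∣ k)
    (hk0 : 0 < k) (hkn : k < n)
    (P : Polynomial ℤ) (hP : P * gaussDen k = gaussNum n k) :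
    ¬ ((X : Polynomial ℤ) ^ n - 1 ∣ P * (X - 1) * X ^ n) := by
  intro hdvd
  obtain ⟨Q, hQ⟩ := hdvd
  -- evaluate at -1
  have hne : (-1 : ℤ) ^ n = 1 := by rw [hn, pow_mul]; simp
  have hev := congrArg (Polynomial.eval (-1 : ℤ)) hQ
  simp only [eval_mul, eval_sub, eval_pow, eval_X, eval_one, hne] at hev
  have hProot : P.eval (-1) = 0 := by
    have : P.eval (-1) * (-1 - 1) * 1 = (1 - 1) * Q.eval (-1) := hev
    simp at this
    linarith [this]
  -- nonvanishing factors
  have hNumNe : ∀ i ∈ range k, (1 - X ^ (n - i) : Polynomial ℤ) ≠ 0 := fun i hi =>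
    one_sub_X_pow_ne_zero_s12 (by have := mem_range.1 hi; omega)
  have hDenNe : ∀ i ∈ range k, (1 - X ^ (i + 1) : Polynomial ℤ) ≠ 0 := fun i _ =>
    one_sub_X_pow_ne_zero_s12 (by omega)
  have hNum0 : gaussNum n k ≠ 0 := Finset.prod_ne_zero_iff.mpr hNumNe
  have hDen0 : gaussDen k ≠ 0 := Finset.prod_ne_zero_iff.mpr hDenNe
  have hP0 : P ≠ 0 := by
    intro h
    rw [h, zero_mul] at hP
    exact hNum0 hP.symm
  -- root multiplicities
  have hrmNum : rootMultiplicity (-1 : ℤ) (gaussNum n k) =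
      ∑ i ∈ range k, (if Even i then (1 : ℕ) else 0) := by
    rw [gaussNum, rm_prod k _ hNumNe]
    apply Finset.sum_congr rfl
    intro i hi
    have hi' : i < k := mem_range.1 hi
    rw [rm_one_sub_X_pow (by omega)]
    congr 1
    rw [Nat.even_sub (by omega : i ≤ n)]
    simp [hn, parity_simps]
  have hrmDen : rootMultiplicity (-1 : ℤ) (gaussDen k) =
      ∑ i ∈ range k, (if Even (i + 1) then (1 : ℕ) else 0) := by
    rw [gaussDen, rm_prod k _ hDenNe]
    exact Finset.sum_congr rfl fun i _ => rm_one_sub_X_pow (by omega)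
  obtain ⟨j, hj⟩ := hk
  have heq : rootMultiplicity (-1 : ℤ) (gaussNum n k) =
      rootMultiplicity (-1 : ℤ) (gaussDen k) := by
    rw [hrmNum, hrmDen, hj, parity_sum]
  have hmul : rootMultiplicity (-1 : ℤ) P + rootMultiplicity (-1 : ℤ) (gaussDen k) =
      rootMultiplicity (-1 : ℤ) (gaussNum n k) := by
    rw [← hP, rootMultiplicity_mul (hP ▸ hNum0)]
  have hPrm : rootMultiplicity (-1 : ℤ) P = 0 := by omega
  have : 0 < rootMultiplicity (-1 : ℤ) P :=
    (rootMultiplicity_pos hP0).mpr hProot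
  omega
end
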